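/- Let 𝔤̄ = span{X̄₁, X̄₂, Ȳ₁, Ȳ₂, Z̄₁, Z̄₂} be the two-step nilpotent Lie algebra with nonzero brackets [X̄₁,Ȳ₁] = [X̄₂,Ȳ₂] = Z̄₁ and [X̄₁,Ȳ₂] = Z̄₂. Then the linear map Ψ₂ defined by X̄₁ ↦ X̄₁, X̄₂ ↦ X̄₂ + ¼Z̄₁, Ȳ₁ ↦ Ȳ₁, Ȳ₂ ↦ Ȳ₂ − Z̄₁ − Z̄₂, Z̄₁ ↦ Z̄₁, Z̄₂ ↦ Z̄₂ is a Lie algebra automorphism of 𝔤̄ satisfying Ψ₂(U) − U ∈ [U, 𝔤̄] for all U ∈ 𝔤̄. -/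
import Mathlib


namespace Stmt13

/-- The 6-dimensional space with coordinates `(x̄₁, x̄₂, ȳ₁, ȳ₂, z̄₁, z̄₂)`. -/
abbrev V : Type := Fin 6 → ℝ

/-- The two-step bracket determined by `[X̄₁,Ȳ₁] = [X̄₂,Ȳ₂] = Z̄₁`,
`[X̄₁,Ȳ₂] = Z̄₂`, all other basis brackets zero. -/
def br (u v : V) : V :=
  ![0, 0, 0, 0,
    u 0 * v 2 - u 2 * v 0 + u 1 * v 3 - u 3 * v 1,
    u 0 * v 3 - u 3 * v 0]

/-- The linear map `Ψ₂` given on the basis by `X̄₁ ↦ X̄₁`, `X̄₂ ↦ X̄₂ + ¼Z̄₁`,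
`Ȳ₁ ↦ Ȳ₁`, `Ȳ₂ ↦ Ȳ₂ − Z̄₁ − Z̄₂`, `Z̄₁ ↦ Z̄₁`, `Z̄₂ ↦ Z̄₂`. -/
noncomputable def Psi (u : V) : V :=
  ![u 0, u 1, u 2, u 3,
    (1 / 4) * u 1 - u 3 + u 4,
    -u 3 + u 5]

noncomputable def PsiInv (u : V) : V :=
  ![u 0, u 1, u 2, u 3,
    -(1 / 4) * u 1 + u 3 + u 4,
    u 3 + u 5]

@[simp] lemma vec6_five (a b c d e f : ℝ) : ![a, b, c, d, e, f] 5 = f := rfl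

/-- `Ψ₂` is a Lie algebra automorphism of `(V, br)` which is
almost inner at the algebra level: `Ψ₂(U) − U ∈ [U, 𝔤̄]` for every `U`. -/
theorem stmt13 :
    (∀ u v : V, Psi (br u v) = br (Psi u) (Psi v)) ∧ Function.Bijective Psi ∧
      (∀ u : V, ∃ v : V, Psi u - u = br u v) := by
  refine ⟨?_, ?_, ?_⟩
  · intro u v
    funext i
    fin_cases i <;> simp [Psi, br, Matrix.cons_val_succ] <;> ring
  · apply Function.bijective_iff_has_inverse.mpr
    refine ⟨PsiInv, ?_, ?_⟩ <;> intro u <;> funext i <;>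
      fin_cases i <;> simp [Psi, PsiInv, Matrix.cons_val_succ] <;> ring
  · intro u
    by_cases h0 : u 0 ≠ 0
    · refine ⟨![1, 1, ((1/4) * u 1 + u 2) / u 0, 0, 0, 0], ?_⟩
      funext i
      fin_cases i <;> simp [Psi, br, Matrix.cons_val_succ] <;> field_simp <;> ring
    · push_neg at h0
      by_cases h1 : u 1 ≠ 0
      · refine ⟨![1, 1, 0, ((1/4) * u 1 + u 2) / u 1, 0, 0], ?_⟩
        funext i
        fin_cases i <;> simp [Psi, br, h0, Matrix.cons_val_succ] <;> field_simp <;> ring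
      · push_neg at h1
        by_cases h3 : u 3 ≠ 0
        · refine ⟨![1, (u 3 - u 2) / u 3, 0, 0, 0, 0], ?_⟩
          funext i
          fin_cases i <;> simp [Psi, br, h0, h1, Matrix.cons_val_succ] <;> field_simp <;> ring
        · push_neg at h3
          refine ⟨0, ?_⟩
          funext i
          fin_cases i <;> simp [Psi, br, h0, h1, h3, Matrix.cons_val_succ]

end Stmt13
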